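/- Let r ≥ 1 be an integer and let C = { i ∈ [n−1] : v_i < u_{i+1} } ∪ { n }. The poset P_{𝓛×[r]} is connected if and only if r = 1 and |C| = 1. Moreover, the number of connected components of P_{𝓛×[r]} equals |C| when r = 1 and equals |C| + 1 when r ≥ 2. -/

import Mathlib

namespace LadderPaper

/-- The tuple `a_{i,j}`: entry `t` is `u t` for `t < i` and `max (j + (t - i)) (u t)` for
`t ≥ i` (indices `t ∈ [1,n]`; entries outside `[1,n]` are set to `0`). -/
def atuple (u : ℕ → ℤ) (n i : ℕ) (j : ℤ) : ℕ → ℤ := fun t =>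
  if 1 ≤ t ∧ t ≤ n then
    (if t < i then u t else max (j + ((t : ℤ) - (i : ℤ))) (u t))
  else 0

/-- The tuple `b_{i,j}`: like `a_{i,j}` but with `i`-th entry `j - 1`. -/
def btuple (u : ℕ → ℤ) (n i : ℕ) (j : ℤ) : ℕ → ℤ := fun t =>
  if 1 ≤ t ∧ t ≤ n then
    (if t < i then u t
     else if t = i then j - 1
     else max (j + ((t : ℤ) - (i : ℤ))) (u t))
  else 0

/-- The tuple `(u_1, …, u_n)`. -/
def utuple (u : ℕ → ℤ) (n : ℕ) : ℕ → ℤ := fun t =>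
  if 1 ≤ t ∧ t ≤ n then u t else 0

/-- The lattice `𝓛` of tuples `c` with `u t ≤ c t ≤ v t` for `t ∈ [1,n]`, strictly
increasing entries, and (normalization) `c t = 0` outside `[1,n]`.  It carries the
componentwise (induced product) order. -/
def ladderL (n : ℕ) (u v : ℕ → ℤ) : Set (ℕ → ℤ) :=
  {c | (∀ t, 1 ≤ t → t ≤ n → u t ≤ c t ∧ c t ≤ v t) ∧
       (∀ t, 1 ≤ t → t + 1 ≤ n → c t < c (t + 1)) ∧
       (∀ t, t = 0 ∨ n < t → c t = 0)}

/-- The set `P_𝓛 = { a_{i,j} : i ∈ [n], j ∈ [u_i + 1, v_i] }`. -/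
def PL (n : ℕ) (u v : ℕ → ℤ) : Set (ℕ → ℤ) :=
  {x | ∃ i : ℕ, ∃ j : ℤ, 1 ≤ i ∧ i ≤ n ∧ u i + 1 ≤ j ∧ j ≤ v i ∧ x = atuple u n i j}

/-- The product poset `𝓛 × [r]`. -/
def ladderLr (n : ℕ) (u v : ℕ → ℤ) (r : ℤ) : Set ((ℕ → ℤ) × ℤ) :=
  {p | p.1 ∈ ladderL n u v ∧ 1 ≤ p.2 ∧ p.2 ≤ r}

/-- The set `P_{𝓛×[r]} = { (a_{i,j}, 1) } ∪ { ((u_1,…,u_n), k) : k ∈ [2,r] }`. -/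
def PLr (n : ℕ) (u v : ℕ → ℤ) (r : ℤ) : Set ((ℕ → ℤ) × ℤ) :=
  {p | (p.1 ∈ PL n u v ∧ p.2 = 1) ∨ (p.1 = utuple u n ∧ 2 ≤ p.2 ∧ p.2 ≤ r)}

/-- `ε_i > 1`, with the convention `ε_n > 1` (i.e. `i = n` or `u_{i+1} - u_i > 1`). -/
def epsGt1 (u : ℕ → ℤ) (n i : ℕ) : Prop := i = n ∨ 1 < u (i + 1) - u i

/-- `θ_{i-1} > 1`, with the convention `θ_0 > 1` (i.e. `i = 1` or `v_i - v_{i-1} > 1`). -/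
def thetaGt1 (v : ℕ → ℤ) (i : ℕ) : Prop := i = 1 ∨ 1 < v i - v (i - 1)

/-- Membership in `C = { i ∈ [n-1] : v_i < u_{i+1} } ∪ { n }`. -/
def inC (n : ℕ) (u v : ℕ → ℤ) (i : ℕ) : Prop :=
  (1 ≤ i ∧ i + 1 ≤ n ∧ v i < u (i + 1)) ∨ i = n

/-- The set `C = { i ∈ [n-1] : v_i < u_{i+1} } ∪ { n }`. -/
def Cset (n : ℕ) (u v : ℕ → ℤ) : Set ℕ :=
  {i | 1 ≤ i ∧ i + 1 ≤ n ∧ v i < u (i + 1)} ∪ {n}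

/-- `[p,q]` is one of the blocks `[p_s, q_s]` determined by `C`: `q ∈ C`,
no element of `C` lies in `[p, q-1]`, and either `p = 1` or `p - 1 ∈ C`. -/
def IsBlock (n : ℕ) (u v : ℕ → ℤ) (p q : ℕ) : Prop :=
  1 ≤ p ∧ p ≤ q ∧ q ≤ n ∧ inC n u v q ∧
    (∀ j, p ≤ j → j < q → ¬ inC n u v j) ∧ (p = 1 ∨ inC n u v (p - 1))

/-- `i0 = min { i ∈ [p,q] : ε_i > 1 }` (with the convention `ε_n > 1`). -/
def IsBlockMin (n : ℕ) (u : ℕ → ℤ) (p q i0 : ℕ) : Prop :=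
  p ≤ i0 ∧ i0 ≤ q ∧ epsGt1 u n i0 ∧ ∀ j, p ≤ j → j < i0 → ¬ epsGt1 u n j

/-- The comparability graph of a poset: two distinct elements are adjacent
iff they are comparable. -/
def compGraph (α : Type*) [Preorder α] : SimpleGraph α where
  Adj x y := x ≠ y ∧ (x ≤ y ∨ y ≤ x)
  symm := ⟨fun x y h => ⟨Ne.symm h.1, Or.symm h.2⟩⟩
  loopless := ⟨fun x h => h.1 rfl⟩

/-- A poset is pure if all of its maximal chains have the same cardinality
(equivalently, the same length). -/
def IsPure (α : Type*) [Preorder α] : Prop :=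
  ∀ A B : Set α, IsMaxChain (· ≤ ·) A → IsMaxChain (· ≤ ·) B → A.ncard = B.ncard


/-!
Label `(a_{i,j}, 1)` by the top `q` of the block `[p, q]` cut out by `C` that contains `i`, and
the elements `((u_1, …, u_n), k)`, `k ≥ 2`, by one extra label. Comparable elements carry the same
label: `a_{s,j} ≤ a_{t,j'}` forces `s ≥ t`, and for `s > t` comparing `s`-th entries shows
`u_{k+1} ≤ v_k` for all `k ∈ [t, s)`, so no element of `C` lies in `[t, s)`. Conversely, inside a
block `a_{i,j} ≤ a_{i,v_i} ≥ a_{i+1,u_{i+1}+1}`, which links every element to the block's anchor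
`a_{q,u_q+1}`, and the elements with `k ≥ 2` form a chain. Hence the components are in bijection
with the labels: `|C|` of them, plus one when `r ≥ 2`.
-/

theorem _root_.SimpleGraph.connected_iff_card_connectedComponent_eq_one {V : Type*}
    (G : SimpleGraph V) : G.Connected ↔ Nat.card G.ConnectedComponent = 1 := by
  rw [Nat.card_eq_one_iff_unique, SimpleGraph.connected_iff]
  refine and_congr ⟨SimpleGraph.Preconnected.subsingleton_connectedComponent, ?_⟩
    ⟨fun ⟨v⟩ => ⟨G.connectedComponentMk v⟩, fun ⟨c⟩ => ⟨c.out⟩⟩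
  intro _ v w
  exact SimpleGraph.ConnectedComponent.exact (Subsingleton.elim _ _)

theorem _root_.SimpleGraph.card_connectedComponent_eq_ncard_range {V β : Type*}
    (G : SimpleGraph V) (f : V → β) (hf : ∀ x y, G.Reachable x y ↔ f x = f y) :
    Nat.card G.ConnectedComponent = (Set.range f).ncard := by
  let F : G.ConnectedComponent → β :=
    SimpleGraph.ConnectedComponent.lift f fun x y p _ => (hf x y).mp p.reachable
  have hF : Function.Injective F :=
    SimpleGraph.ConnectedComponent.ind₂ fun x y hxy =>
      SimpleGraph.ConnectedComponent.sound ((hf x y).mpr hxy)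
  have hrange : Set.range F = Set.range f := (Quot.mk_surjective.range_comp F).symm
  rw [Nat.card_congr (Equiv.ofInjective F hF), hrange, Nat.card_coe_set_eq]

lemma compGraph_reachable_of_le {α : Type*} [Preorder α] {x y : α} (h : x ≤ y) :
    (compGraph α).Reachable x y := by
  obtain rfl | hne := eq_or_ne x y
  · rfl
  · exact SimpleGraph.Adj.reachable ⟨hne, Or.inl h⟩

lemma compGraph_reachable_iff {α β : Type*} [Preorder α] {f : α → β}
    (hf : ∀ x y, x ≤ y → f x = f y) (hreach : ∀ x y, f x = f y → (compGraph α).Reachable x y)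
    (x y : α) : (compGraph α).Reachable x y ↔ f x = f y := by
  refine ⟨?_, hreach x y⟩
  rintro ⟨p⟩
  induction p with
  | nil => rfl
  | cons h _ ih => exact (h.2.elim (hf _ _) fun h' => (hf _ _ h').symm).trans ih

section Ladder

variable {n : ℕ} {u v : ℕ → ℤ}

lemma add_sub_le_of_forall_lt_succ {w : ℕ → ℤ} (hw : ∀ i, 1 ≤ i → i + 1 ≤ n → w i < w (i + 1))
    {s t : ℕ} (hs : 1 ≤ s) (hst : s ≤ t) (ht : t ≤ n) : w s + ((t : ℤ) - s) ≤ w t := by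
  induction t, hst using Nat.le_induction with
  | base => simp
  | succ t hst ih =>
    have := hw t (hs.trans hst) ht
    push_cast
    linarith [ih (by omega)]

lemma atuple_of_lt {i t : ℕ} {j : ℤ} (ht : 1 ≤ t) (htn : t ≤ n) (hti : t < i) :
    atuple u n i j t = u t := by
  simp [atuple, ht, htn, hti]

lemma atuple_of_le {i t : ℕ} {j : ℤ} (ht : 1 ≤ t) (htn : t ≤ n) (hit : i ≤ t) :
    atuple u n i j t = max (j + ((t : ℤ) - i)) (u t) := by
  simp [atuple, ht, htn, Nat.not_lt.mpr hit]

lemma atuple_self {i : ℕ} {j : ℤ} (hi : 1 ≤ i) (hin : i ≤ n) (hj : u i ≤ j) :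
    atuple u n i j i = j := by
  rw [atuple_of_le hi hin le_rfl]
  omega

lemma atuple_mono (i : ℕ) : Monotone (atuple u n i) := by
  intro j j' h t
  simp only [atuple]
  split_ifs <;> omega

lemma atuple_succ_le {i : ℕ} {j j' : ℤ} (hj : j' ≤ j + 1) :
    atuple u n (i + 1) j' ≤ atuple u n i j := by
  intro t
  simp only [atuple]
  split_ifs <;> omega

lemma not_atuple_le_of_lt {s t : ℕ} {j j' : ℤ} (hs : 1 ≤ s) (hst : s < t) (htn : t ≤ n)
    (hj : u s < j) : ¬ atuple u n s j ≤ atuple u n t j' := fun h => by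
  have := Pi.le_def.mp h s
  rw [atuple_self hs (by omega) hj.le, atuple_of_lt hs (by omega) hst] at this
  omega

lemma not_atuple_le_utuple {i : ℕ} {j : ℤ} (hi : 1 ≤ i) (hin : i ≤ n) (hj : u i < j) :
    ¬ atuple u n i j ≤ utuple u n := fun h => by
  have := Pi.le_def.mp h i
  rw [atuple_self hi hin hj.le] at this
  simp only [utuple, hi, hin, and_self, if_true] at this
  omega

lemma le_of_atuple_le (humono : ∀ i, 1 ≤ i → i + 1 ≤ n → u i < u (i + 1))
    (hvmono : ∀ i, 1 ≤ i → i + 1 ≤ n → v i < v (i + 1)) {s t k : ℕ} {j j' : ℤ}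
    (hs : 1 ≤ s) (htn : t ≤ n) (hsk : s ≤ k) (hkt : k < t) (hjv : j ≤ v s) (hj' : u t < j')
    (h : atuple u n t j' ≤ atuple u n s j) : u (k + 1) ≤ v k := by
  have ht := Pi.le_def.mp h t
  rw [atuple_self (by omega) htn hj'.le, atuple_of_le (by omega) htn (by omega)] at ht
  have hu := add_sub_le_of_forall_lt_succ humono (s := k + 1) (t := t) (by omega) hkt htn
  have hv := add_sub_le_of_forall_lt_succ hvmono hs hsk (by omega)
  push_cast at hu
  omega

noncomputable def firstDiff (n : ℕ) (u c : ℕ → ℤ) : ℕ :=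
  sInf {t | 1 ≤ t ∧ t ≤ n ∧ c t ≠ u t}

lemma firstDiff_atuple {i : ℕ} {j : ℤ} (hi : 1 ≤ i) (hin : i ≤ n) (hj : u i < j) :
    firstDiff n u (atuple u n i j) = i := by
  have hmem : i ∈ {t | 1 ≤ t ∧ t ≤ n ∧ atuple u n i j t ≠ u t} :=
    ⟨hi, hin, by rw [atuple_self hi hin hj.le]; omega⟩
  refine le_antisymm (Nat.sInf_le hmem) (not_lt.mp fun hlt => ?_)
  obtain ⟨h1, h2, h3⟩ := Nat.sInf_mem ⟨i, hmem⟩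
  exact h3 (atuple_of_lt h1 h2 hlt)

/-- The top `q_s` of the block `[p_s, q_s]` containing `i`. -/
noncomputable def blockTop (n : ℕ) (u v : ℕ → ℤ) (i : ℕ) : ℕ :=
  sInf {q | i ≤ q ∧ inC n u v q}

lemma inC.le {q : ℕ} (h : inC n u v q) : q ≤ n := by
  rcases h with ⟨-, h, -⟩ | rfl <;> omega

lemma blockTop_spec {i : ℕ} (hin : i ≤ n) :
    i ≤ blockTop n u v i ∧ inC n u v (blockTop n u v i) :=
  Nat.sInf_mem (s := {q | i ≤ q ∧ inC n u v q}) ⟨n, hin, Or.inr rfl⟩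

lemma blockTop_le {i q : ℕ} (hiq : i ≤ q) (hq : inC n u v q) : blockTop n u v i ≤ q :=
  Nat.sInf_le ⟨hiq, hq⟩

lemma blockTop_of_inC {q : ℕ} (hq : inC n u v q) : blockTop n u v q = q :=
  le_antisymm (blockTop_le le_rfl hq) (blockTop_spec hq.le).1

lemma blockTop_eq_of_forall_not_inC {s t : ℕ} (hts : t ≤ s) (hsn : s ≤ n)
    (hgap : ∀ k, t ≤ k → k < s → ¬ inC n u v k) : blockTop n u v t = blockTop n u v s := by
  obtain ⟨hs, hsC⟩ := blockTop_spec (u := u) (v := v) hsn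
  obtain ⟨ht, htC⟩ := blockTop_spec (u := u) (v := v) (hts.trans hsn)
  refine le_antisymm (blockTop_le (hts.trans hs) hsC) (blockTop_le ?_ htC)
  by_contra! hlt
  exact hgap _ ht hlt htC

lemma mem_Cset {q : ℕ} : q ∈ Cset n u v ↔ inC n u v q := Iff.rfl

lemma Cset_finite : (Cset n u v).Finite :=
  (Set.finite_Iic n).subset fun _ hq => (mem_Cset.mp hq).le

noncomputable def blockLabel (n : ℕ) (u v : ℕ → ℤ) (p : (ℕ → ℤ) × ℤ) : Option ℕ :=
  if p.2 = 1 then some (blockTop n u v (firstDiff n u p.1)) else none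

lemma blockLabel_atuple {i : ℕ} {j : ℤ} (hi : 1 ≤ i) (hin : i ≤ n) (hj : u i < j) :
    blockLabel n u v (atuple u n i j, 1) = some (blockTop n u v i) := by
  simp [blockLabel, firstDiff_atuple hi hin hj]

lemma blockLabel_of_ne_one {p : (ℕ → ℤ) × ℤ} (h : p.2 ≠ 1) : blockLabel n u v p = none :=
  if_neg h

lemma atuple_mem_PLr {r : ℤ} {i : ℕ} {j : ℤ} (hi : 1 ≤ i) (hin : i ≤ n) (hj : u i < j)
    (hjv : j ≤ v i) : (atuple u n i j, (1 : ℤ)) ∈ PLr n u v r :=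
  Or.inl ⟨⟨i, j, hi, hin, hj, hjv, rfl⟩, rfl⟩

lemma blockLabel_eq_of_le (humono : ∀ i, 1 ≤ i → i + 1 ≤ n → u i < u (i + 1))
    (hvmono : ∀ i, 1 ≤ i → i + 1 ≤ n → v i < v (i + 1)) {r : ℤ} {p q : (ℕ → ℤ) × ℤ}
    (hp : p ∈ PLr n u v r) (hq : q ∈ PLr n u v r) (hpq : p ≤ q) :
    blockLabel n u v p = blockLabel n u v q := by
  obtain ⟨c, k⟩ := p
  obtain ⟨d, l⟩ := q
  obtain ⟨hcd, hkl⟩ := Prod.mk_le_mk.mp hpq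
  rcases hp with ⟨⟨s, j, hs, hsn, hj, hjv, rfl⟩, rfl : k = 1⟩ | ⟨rfl, hk, -⟩
  · rcases hq with ⟨⟨t, j', ht, htn, hj', hjv', rfl⟩, rfl : l = 1⟩ | ⟨rfl, -, -⟩
    · rw [blockLabel_atuple hs hsn hj, blockLabel_atuple ht htn hj', Option.some_inj]
      rcases lt_trichotomy s t with hst | rfl | hts
      · exact absurd hcd (not_atuple_le_of_lt hs hst htn hj)
      · rfl
      · refine (blockTop_eq_of_forall_not_inC hts.le hsn fun m htm hms hm => ?_).symm
        rcases hm with ⟨-, -, hgap⟩ | rfl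
        · exact (le_of_atuple_le humono hvmono ht hsn htm hms hjv' hj hcd).not_gt hgap
        · omega
    · exact absurd hcd (not_atuple_le_utuple hs hsn hj)
  · rcases hq with ⟨-, rfl : l = 1⟩ | ⟨-, hl, -⟩
    · omega
    · rw [blockLabel_of_ne_one (show k ≠ 1 by omega), blockLabel_of_ne_one (show l ≠ 1 by omega)]

lemma reachable_blockAnchor (huv : ∀ i, 1 ≤ i → i ≤ n → u i < v i) {r : ℤ} {i : ℕ} {j : ℤ}
    (hi : 1 ≤ i) (hin : i ≤ n) (hj : u i < j) (hjv : j ≤ v i) (x y : ↥(PLr n u v r))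
    (hx : x.1 = (atuple u n i j, 1))
    (hy : y.1 = (atuple u n (blockTop n u v i) (u (blockTop n u v i) + 1), 1)) :
    (compGraph ↥(PLr n u v r)).Reachable x y := by
  by_cases hiC : inC n u v i
  · rw [blockTop_of_inC hiC] at hy
    refine (compGraph_reachable_of_le (α := ↥(PLr n u v r)) ?_).symm
    change y.1 ≤ x.1
    rw [hx, hy]
    exact Prod.mk_le_mk.mpr ⟨atuple_mono i (by omega), le_rfl⟩
  · have hin' : i + 1 ≤ n := lt_of_le_of_ne hin fun h => hiC (Or.inr h)
    have hstep : u (i + 1) ≤ v i := by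
      by_contra! hgap
      exact hiC (Or.inl ⟨hi, hin', hgap⟩)
    have hblock : blockTop n u v i = blockTop n u v (i + 1) :=
      blockTop_eq_of_forall_not_inC (by omega) hin' fun k hik hki => by
        obtain rfl : k = i := by omega
        exact hiC
    have huv' := huv (i + 1) (by omega) hin'
    let top : ↥(PLr n u v r) := ⟨_, atuple_mem_PLr hi hin (huv i hi hin) le_rfl⟩
    let next : ↥(PLr n u v r) := ⟨_, atuple_mem_PLr (by omega) hin' (lt_add_one _) huv'⟩
    have hx_top : (compGraph ↥(PLr n u v r)).Reachable x top := by
      refine compGraph_reachable_of_le (α := ↥(PLr n u v r)) ?_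
      change x.1 ≤ top.1
      rw [hx]
      exact Prod.mk_le_mk.mpr ⟨atuple_mono i hjv, le_rfl⟩
    have hnext_top : (compGraph ↥(PLr n u v r)).Reachable next top :=
      compGraph_reachable_of_le (α := ↥(PLr n u v r))
        (Prod.mk_le_mk.mpr ⟨atuple_succ_le (by omega), le_rfl⟩)
    rw [hblock] at hy
    exact hx_top.trans (hnext_top.symm.trans
      (reachable_blockAnchor huv (by omega) hin' (lt_add_one _) huv' next y rfl hy))
termination_by n - i

lemma reachable_of_blockLabel_eq (huv : ∀ i, 1 ≤ i → i ≤ n → u i < v i) {r : ℤ}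
    (x y : ↥(PLr n u v r)) (hxy : blockLabel n u v x.1 = blockLabel n u v y.1) :
    (compGraph ↥(PLr n u v r)).Reachable x y := by
  have hx := x.2
  have hy := y.2
  rcases hx with ⟨⟨i, j, hi, hin, hj, hjv, hxc⟩, hxk⟩ | ⟨hxc, hxk, -⟩
  · rcases hy with ⟨⟨i', j', hi', hin', hj', hjv', hyc⟩, hyk⟩ | ⟨-, hyk, -⟩
    · have hx : x.1 = (atuple u n i j, 1) := Prod.ext hxc hxk
      have hy : y.1 = (atuple u n i' j', 1) := Prod.ext hyc hyk
      rw [hx, hy, blockLabel_atuple hi hin hj, blockLabel_atuple hi' hin' hj',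
        Option.some_inj] at hxy
      obtain ⟨hiq, hqC⟩ := blockTop_spec (u := u) (v := v) hin
      have hqn := hqC.le
      let anchor : ↥(PLr n u v r) :=
        ⟨_, atuple_mem_PLr (by omega) hqn (lt_add_one _) (huv _ (by omega) hqn)⟩
      exact (reachable_blockAnchor huv hi hin hj hjv x anchor hx rfl).trans
        (reachable_blockAnchor huv hi' hin' hj' hjv' y anchor hy (by rw [← hxy])).symm
    · simp [blockLabel, hxk, show y.1.2 ≠ 1 by omega] at hxy
  · rcases hy with ⟨-, hyk⟩ | ⟨hyc, -, -⟩
    · simp [blockLabel, hyk, show x.1.2 ≠ 1 by omega] at hxy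
    · rcases le_total x.1.2 y.1.2 with hxy | hyx
      · exact compGraph_reachable_of_le (α := ↥(PLr n u v r))
          (Prod.le_def.mpr ⟨(hxc.trans hyc.symm).le, hxy⟩)
      · exact (compGraph_reachable_of_le (α := ↥(PLr n u v r))
          (Prod.le_def.mpr ⟨(hyc.trans hxc.symm).le, hyx⟩)).symm

lemma reachable_iff_blockLabel_eq (humono : ∀ i, 1 ≤ i → i + 1 ≤ n → u i < u (i + 1))
    (hvmono : ∀ i, 1 ≤ i → i + 1 ≤ n → v i < v (i + 1))
    (huv : ∀ i, 1 ≤ i → i ≤ n → u i < v i) {r : ℤ} (x y : ↥(PLr n u v r)) :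
    (compGraph ↥(PLr n u v r)).Reachable x y ↔ blockLabel n u v x.1 = blockLabel n u v y.1 :=
  compGraph_reachable_iff (α := ↥(PLr n u v r)) (f := fun x => blockLabel n u v x.1)
    (fun x y h => blockLabel_eq_of_le humono hvmono x.2 y.2 h)
    (fun x y hxy => reachable_of_blockLabel_eq huv x y hxy) x y

lemma some_mem_range_blockLabel_iff (hn : 1 ≤ n) (huv : ∀ i, 1 ≤ i → i ≤ n → u i < v i)
    {r : ℤ} {q : ℕ} :
    some q ∈ Set.range (fun x : ↥(PLr n u v r) => blockLabel n u v x.1) ↔ q ∈ Cset n u v := by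
  constructor
  · rintro ⟨x, hx⟩
    rcases x.2 with ⟨⟨i, j, hi, hin, hj, -, hxc⟩, hxk⟩ | ⟨-, hxk, -⟩
    · have hx' : x.1 = (atuple u n i j, 1) := Prod.ext hxc hxk
      simp only [hx', blockLabel_atuple hi hin hj, Option.some_inj] at hx
      exact hx ▸ mem_Cset.mpr (blockTop_spec hin).2
    · simp [blockLabel, show x.1.2 ≠ 1 by omega] at hx
  · intro hq
    have hqC := mem_Cset.mp hq
    have hq1 : 1 ≤ q := by rcases hqC with ⟨h, -, -⟩ | rfl <;> omega
    exact ⟨⟨_, atuple_mem_PLr hq1 hqC.le (lt_add_one _) (huv q hq1 hqC.le)⟩,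
      by simp [blockLabel_atuple hq1 hqC.le (lt_add_one _), blockTop_of_inC hqC]⟩

lemma none_mem_range_blockLabel_iff {r : ℤ} :
    none ∈ Set.range (fun x : ↥(PLr n u v r) => blockLabel n u v x.1) ↔ 2 ≤ r := by
  constructor
  · rintro ⟨x, hx⟩
    rcases x.2 with ⟨-, hxk⟩ | ⟨-, hk, hkr⟩
    · simp [blockLabel, hxk] at hx
    · omega
  · intro hr
    exact ⟨⟨(utuple u n, 2), Or.inr ⟨rfl, le_rfl, hr⟩⟩, blockLabel_of_ne_one (by norm_num)⟩

end Ladder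

theorem stmt6_general
    (n : ℕ) (u v : ℕ → ℤ)
    (hn : 1 ≤ n)
    (humono : ∀ i, 1 ≤ i → i + 1 ≤ n → u i < u (i + 1))
    (hvmono : ∀ i, 1 ≤ i → i + 1 ≤ n → v i < v (i + 1))
    (huv : ∀ i, 1 ≤ i → i ≤ n → u i < v i)
    (r : ℤ) (hr : 1 ≤ r) :
    ((compGraph ↥(PLr n u v r)).Connected ↔ (r = 1 ∧ (Cset n u v).ncard = 1)) ∧
    (r = 1 →
      Nat.card (compGraph ↥(PLr n u v r)).ConnectedComponent = (Cset n u v).ncard) ∧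
    (2 ≤ r →
      Nat.card (compGraph ↥(PLr n u v r)).ConnectedComponent = (Cset n u v).ncard + 1) := by
  have hcard := (compGraph ↥(PLr n u v r)).card_connectedComponent_eq_ncard_range _
    (reachable_iff_blockLabel_eq humono hvmono huv)
  have hcard_one : r = 1 →
      Nat.card (compGraph ↥(PLr n u v r)).ConnectedComponent = (Cset n u v).ncard := by
    intro hr1
    rw [hcard, ← Set.ncard_image_of_injective _ (Option.some_injective ℕ)]
    congr 1
    ext (_ | q)
    · simp [none_mem_range_blockLabel_iff (u := u), hr1]
    · rw [some_mem_range_blockLabel_iff hn huv, (Option.some_injective ℕ).mem_set_image]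
  have hcard_two : 2 ≤ r →
      Nat.card (compGraph ↥(PLr n u v r)).ConnectedComponent = (Cset n u v).ncard + 1 := by
    intro hr2
    rw [hcard, ← Set.ncard_image_of_injective _ (Option.some_injective ℕ),
      ← Set.ncard_insert_of_notMem (a := none) (by simp) (Cset_finite.image _)]
    congr 1
    ext (_ | q)
    · simp [none_mem_range_blockLabel_iff (u := u), hr2]
    · rw [some_mem_range_blockLabel_iff hn huv, Set.mem_insert_iff,
        (Option.some_injective ℕ).mem_set_image]
      simp
  refine ⟨?_, hcard_one, hcard_two⟩
  rw [SimpleGraph.connected_iff_card_connectedComponent_eq_one]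
  obtain rfl | hr2 := hr.eq_or_lt
  · simp [hcard_one rfl]
  · have hC : 0 < (Cset n u v).ncard := (Set.ncard_pos Cset_finite).mpr ⟨n, Or.inr rfl⟩
    rw [hcard_two hr2]
    omega

theorem stmt6
    (n m : ℕ) (u v : ℕ → ℤ)
    (hn : 1 ≤ n) (hnm : n < m)
    (hu1 : u 1 = 1)
    (humono : ∀ i, 1 ≤ i → i + 1 ≤ n → u i < u (i + 1))
    (hum : u n < (m : ℤ))
    (hv1 : 1 < v 1)
    (hvmono : ∀ i, 1 ≤ i → i + 1 ≤ n → v i < v (i + 1))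
    (hvn : v n = (m : ℤ))
    (huv : ∀ i, 1 ≤ i → i ≤ n → u i < v i)
    (hstep : ∀ i, 1 ≤ i → i + 1 ≤ n → u (i + 1) ≤ v i + 1)
    (r : ℤ) (hr : 1 ≤ r) :
    ((compGraph ↥(PLr n u v r)).Connected ↔ (r = 1 ∧ (Cset n u v).ncard = 1)) ∧
    (r = 1 →
      Nat.card (compGraph ↥(PLr n u v r)).ConnectedComponent = (Cset n u v).ncard) ∧
    (2 ≤ r →
      Nat.card (compGraph ↥(PLr n u v r)).ConnectedComponent = (Cset n u v).ncard + 1) :=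
  stmt6_general n u v hn humono hvmono huv r hr

end LadderPaper
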